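/- arXiv:2603.09640 — 5 statements merged into one kernel-verified Lean document; each statement's English description precedes it below -/
import Mathlib

section
/- Let G₁ and G₂ be topological groups. If S₁ ⊆ G₁ and S₂ ⊆ G₂ are finite irredundant (topologically) generating sets, then (S₁ × {1}) ∪ ({1} × S₂) is an irredundant topologically generating set of G₁ × G₂. Consequently m(G₁ × G₂) ≥ m(G₁) + m(G₂), where m denotes the supremum of sizes of finite irredundant topologically generating sets. -/
/-- `X` topologically generates `G`. -/
def TopGen (G : Type*) [Group G] [TopologicalSpace G] (X : Finset G) : Prop :=
  closure ((Subgroup.closure (X : Set G) : Subgroup G) : Set G) = Set.univ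

/-- `X` is an irredundant (topologically) generating set of `G`. -/
def IrredGen (G : Type*) [Group G] [TopologicalSpace G] (X : Finset G) : Prop :=
  TopGen G X ∧ ∀ Y : Finset G, Y ⊂ X → ¬ TopGen G Y

/-- The supremum of sizes of finite irredundant topologically generating sets. -/
noncomputable def mRank (G : Type*) [Group G] [TopologicalSpace G] : ℕ∞ :=
  sSup {n : ℕ∞ | ∃ X : Finset G, IrredGen G X ∧ (X.card : ℕ∞) = n}

section Aux

variable {G₁ G₂ : Type*} [Group G₁] [TopologicalSpace G₁]
    [Group G₂] [TopologicalSpace G₂]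

lemma topGen_mono {X Y : Finset G₁} (hXY : X ⊆ Y) (h : TopGen G₁ X) : TopGen G₁ Y := by
  apply Set.eq_univ_of_univ_subset
  rw [← h]
  exact closure_mono (SetLike.coe_subset_coe.2 (Subgroup.closure_mono (by exact_mod_cast hXY)))

lemma sub_closure_prod (A : Set G₁) (B : Set G₂) :
    Subgroup.closure ((fun a => ((a, 1) : G₁ × G₂)) '' A ∪ (fun b => ((1, b) : G₁ × G₂)) '' B)
      = (Subgroup.closure A).prod (Subgroup.closure B) := by
  apply le_antisymm
  · rw [Subgroup.closure_le]
    rintro x (⟨a, ha, rfl⟩ | ⟨b, hb, rfl⟩)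
    · exact ⟨Subgroup.subset_closure ha, (Subgroup.closure B).one_mem⟩
    · exact ⟨(Subgroup.closure A).one_mem, Subgroup.subset_closure hb⟩
  · rw [Subgroup.prod_le_iff]
    constructor
    · rw [MonoidHom.map_closure]
      apply Subgroup.closure_mono
      intro x hx
      exact Or.inl hx
    · rw [MonoidHom.map_closure]
      apply Subgroup.closure_mono
      intro x hx
      exact Or.inr hx

lemma topGen_union_iff (T₁ : Finset G₁) (T₂ : Finset G₂) [DecidableEq (G₁ × G₂)] :
    TopGen (G₁ × G₂)
      (T₁.image (fun a => ((a, 1) : G₁ × G₂)) ∪ T₂.image (fun b => ((1, b) : G₁ × G₂)))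
      ↔ TopGen G₁ T₁ ∧ TopGen G₂ T₂ := by
  unfold TopGen
  have hcoe : ((T₁.image (fun a => ((a, 1) : G₁ × G₂)) ∪
      T₂.image (fun b => ((1, b) : G₁ × G₂)) : Finset (G₁ × G₂)) : Set (G₁ × G₂)) =
      (fun a => ((a, 1) : G₁ × G₂)) '' ↑T₁ ∪ (fun b => ((1, b) : G₁ × G₂)) '' ↑T₂ := by
    simp [Finset.coe_union, Finset.coe_image]
  rw [hcoe, sub_closure_prod, Subgroup.coe_prod, closure_prod_eq]
  constructor
  · intro h
    constructor
    · apply Set.eq_univ_of_forall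
      intro x
      have : (x, (1 : G₂)) ∈ closure ((Subgroup.closure (T₁ : Set G₁) : Subgroup G₁) : Set G₁)
          ×ˢ closure ((Subgroup.closure (T₂ : Set G₂) : Subgroup G₂) : Set G₂) := by
        rw [h]; trivial
      exact this.1
    · apply Set.eq_univ_of_forall
      intro y
      have : ((1 : G₁), y) ∈ closure ((Subgroup.closure (T₁ : Set G₁) : Subgroup G₁) : Set G₁)
          ×ˢ closure ((Subgroup.closure (T₂ : Set G₂) : Subgroup G₂) : Set G₂) := by
        rw [h]; trivial
      exact this.2
  · rintro ⟨h1, h2⟩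
    rw [h1, h2, Set.univ_prod_univ]

lemma one_not_mem_of_irredGen {S : Finset G₁} [DecidableEq G₁] (h : IrredGen G₁ S) :
    (1 : G₁) ∉ S := by
  intro h1
  apply h.2 (S.erase 1) (Finset.erase_ssubset h1)
  unfold TopGen
  have : Subgroup.closure ((S.erase 1 : Finset G₁) : Set G₁) = Subgroup.closure (S : Set G₁) := by
    apply le_antisymm (Subgroup.closure_mono (by exact_mod_cast Finset.erase_subset _ _))
    rw [Subgroup.closure_le]
    intro x hx
    rcases eq_or_ne x 1 with rfl | hne
    · exact Subgroup.one_mem _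
    · exact Subgroup.subset_closure (by simpa [Finset.mem_erase, hne] using hx)
  rw [this]
  exact h.1

end Aux

/-- If `S₁, S₂` are irredundant generating sets of `G₁, G₂`, then
`(S₁ × {1}) ∪ ({1} × S₂)` is an irredundant generating set of `G₁ × G₂`;
consequently `m(G₁ × G₂) ≥ m(G₁) + m(G₂)`. -/
theorem stmt4 {G₁ G₂ : Type*} [Group G₁] [TopologicalSpace G₁]
    [Group G₂] [TopologicalSpace G₂] [DecidableEq (G₁ × G₂)]
    (S₁ : Finset G₁) (S₂ : Finset G₂)
    (h₁ : IrredGen G₁ S₁) (h₂ : IrredGen G₂ S₂) :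
    IrredGen (G₁ × G₂)
      (S₁.image (fun a => ((a, 1) : G₁ × G₂)) ∪ S₂.image (fun b => ((1, b) : G₁ × G₂))) ∧
    mRank G₁ + mRank G₂ ≤ mRank (G₁ × G₂) := by
  classical
  -- general construction, for arbitrary irredundant sets
  have key : ∀ (A : Finset G₁) (B : Finset G₂), IrredGen G₁ A → IrredGen G₂ B →
      IrredGen (G₁ × G₂)
        (A.image (fun a => ((a, 1) : G₁ × G₂)) ∪ B.image (fun b => ((1, b) : G₁ × G₂))) ∧
      (A.image (fun a => ((a, 1) : G₁ × G₂)) ∪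
        B.image (fun b => ((1, b) : G₁ × G₂))).card = A.card + B.card := by
    intro A B hA hB
    have h1A : (1 : G₁) ∉ A := one_not_mem_of_irredGen hA
    have h1B : (1 : G₂) ∉ B := one_not_mem_of_irredGen hB
    set f : G₁ → G₁ × G₂ := fun a => (a, 1) with hf
    set g : G₂ → G₁ × G₂ := fun b => (1, b) with hg
    have hfinj : Function.Injective f := fun a b h => congrArg Prod.fst h
    have hginj : Function.Injective g := fun a b h => congrArg Prod.snd h
    set X : Finset (G₁ × G₂) := A.image f ∪ B.image g with hX
    constructor
    · constructor
      · exact (topGen_union_iff A B).2 ⟨hA.1, hB.1⟩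
      · intro Y hY hYgen
        set T₁ : Finset G₁ := A.filter (fun a => f a ∈ Y) with hT₁
        set T₂ : Finset G₂ := B.filter (fun b => g b ∈ Y) with hT₂
        have hYsub : Y ⊆ T₁.image f ∪ T₂.image g := by
          intro y hy
          have hyX : y ∈ X := hY.1 hy
          rw [hX, Finset.mem_union] at hyX
          rcases hyX with hy1 | hy2
          · obtain ⟨a, ha, rfl⟩ := Finset.mem_image.1 hy1
            exact Finset.mem_union_left _ (Finset.mem_image_of_mem f
              (Finset.mem_filter.2 ⟨ha, hy⟩))
          · obtain ⟨b, hb, rfl⟩ := Finset.mem_image.1 hy2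
            exact Finset.mem_union_right _ (Finset.mem_image_of_mem g
              (Finset.mem_filter.2 ⟨hb, hy⟩))
        have hTgen : TopGen (G₁ × G₂) (T₁.image f ∪ T₂.image g) :=
          topGen_mono hYsub hYgen
        obtain ⟨hT₁gen, hT₂gen⟩ := (topGen_union_iff T₁ T₂).1 hTgen
        -- find a missing element
        obtain ⟨x, hxX, hxY⟩ := Finset.exists_of_ssubset hY
        rw [hX, Finset.mem_union] at hxX
        rcases hxX with hx1 | hx2
        · obtain ⟨a, ha, rfl⟩ := Finset.mem_image.1 hx1
          have haT : a ∉ T₁ := fun h => hxY (Finset.mem_filter.1 h).2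
          exact hA.2 T₁ ⟨Finset.filter_subset _ _, fun hsub => haT (hsub ha)⟩ hT₁gen
        · obtain ⟨b, hb, rfl⟩ := Finset.mem_image.1 hx2
          have hbT : b ∉ T₂ := fun h => hxY (Finset.mem_filter.1 h).2
          exact hB.2 T₂ ⟨Finset.filter_subset _ _, fun hsub => hbT (hsub hb)⟩ hT₂gen
    · have hdisj : Disjoint (A.image f) (B.image g) := by
        rw [Finset.disjoint_left]
        rintro x hx1 hx2
        obtain ⟨a, ha, rfl⟩ := Finset.mem_image.1 hx1
        obtain ⟨b, hb, hab⟩ := Finset.mem_image.1 hx2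
        have : a = 1 := by
          have := congrArg Prod.fst hab
          simpa [hf, hg] using this.symm
        exact h1A (this ▸ ha)
      rw [hX, Finset.card_union_of_disjoint hdisj,
        Finset.card_image_of_injective _ hfinj, Finset.card_image_of_injective _ hginj]
  refine ⟨(key S₁ S₂ h₁ h₂).1, ?_⟩
  -- the mRank inequality
  unfold mRank
  have hne₁ : {n : ℕ∞ | ∃ X : Finset G₁, IrredGen G₁ X ∧ (X.card : ℕ∞) = n}.Nonempty :=
    ⟨S₁.card, S₁, h₁, rfl⟩
  have hne₂ : {n : ℕ∞ | ∃ X : Finset G₂, IrredGen G₂ X ∧ (X.card : ℕ∞) = n}.Nonempty :=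
    ⟨S₂.card, S₂, h₂, rfl⟩
  rw [sSup_eq_iSup, sSup_eq_iSup]
  apply ENat.biSup_add_biSup_le hne₁ hne₂
  rintro i ⟨A, hA, rfl⟩ j ⟨B, hB, rfl⟩
  obtain ⟨hirr, hcard⟩ := key A B hA hB
  apply le_sSup
  refine ⟨_, hirr, ?_⟩
  rw [hcard]
  push_cast
  rfl
end

section
/- Every finite irredundant topologically generating set of the n-dimensional torus (ℝ/ℤ)^n (with the standard topology) has size at most n. Moreover there exists an irredundant topologically generating set of (ℝ/ℤ)^n of size exactly n. -/
open Filter Topology Set Module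

noncomputable section


variable {E : Type} [NormedAddCommGroup E] [NormedSpace ℝ E] [FiniteDimensional ℝ E]

/-- A closed subgroup of a finite-dimensional normed space that is not discrete near 0
contains a whole line. -/
lemma exists_line_of_not_discrete (G : AddSubgroup E) (hG : IsClosed (G : Set E))
    (h : ∀ ε : ℝ, 0 < ε → ∃ g ∈ G, g ≠ 0 ∧ ‖g‖ < ε) :
    ∃ u : E, u ≠ 0 ∧ ∀ t : ℝ, t • u ∈ G := by
  have hseq : ∀ k : ℕ, ∃ g : E, g ∈ G ∧ g ≠ 0 ∧ ‖g‖ < 1 / (k + 1) := by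
    intro k
    obtain ⟨g, hg, hg0, hgn⟩ := h (1 / (k + 1)) (by positivity)
    exact ⟨g, hg, hg0, hgn⟩
  choose g hgG hg0 hgn using hseq
  have hgnorm : ∀ k, 0 < ‖g k‖ := fun k => norm_pos_iff.mpr (hg0 k)
  set u : ℕ → E := fun k => ‖g k‖⁻¹ • g k with hu
  have humem : ∀ k, u k ∈ Metric.sphere (0 : E) 1 := by
    intro k
    simp only [u, mem_sphere_iff_norm, sub_zero, norm_smul, norm_inv, norm_norm]
    rw [inv_mul_cancel₀ (hgnorm k).ne']
  obtain ⟨v, hvmem, φ, hφ, hconv⟩ :=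
    (isCompact_sphere (0 : E) 1).tendsto_subseq humem
  have hv1 : ‖v‖ = 1 := by simpa [mem_sphere_iff_norm] using hvmem
  refine ⟨v, fun hv => by simp [hv] at hv1, ?_⟩
  intro t
  -- approximate t • v by ⌊t / ‖g (φ k)‖⌋ • g (φ k)
  set m : ℕ → ℤ := fun k => ⌊t / ‖g (φ k)‖⌋ with hm
  have hngk : Tendsto (fun k => ‖g (φ k)‖) atTop (𝓝 0) := by
    have h1 : Tendsto (fun k : ℕ => 1 / ((k : ℝ) + 1)) atTop (𝓝 0) :=
      tendsto_one_div_add_atTop_nhds_zero_nat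
    refine squeeze_zero (fun k => (hgnorm _).le) (fun k => ?_) h1
    calc ‖g (φ k)‖ ≤ 1 / ((φ k : ℝ) + 1) := (hgn _).le
    _ ≤ 1 / ((k : ℝ) + 1) := by
        apply one_div_le_one_div_of_le (by positivity)
        have : (k:ℝ) ≤ (φ k : ℝ) := by exact_mod_cast hφ.le_apply
        linarith
  have ha : Tendsto (fun k => (m k : ℝ) * ‖g (φ k)‖) atTop (𝓝 t) := by
    have hd : Tendsto (fun k => (m k : ℝ) * ‖g (φ k)‖ - t) atTop (𝓝 0) := by
      refine squeeze_zero_norm (fun k => ?_) hngk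
      have h0 := hgnorm (φ k)
      have h1 : (m k : ℝ) ≤ t / ‖g (φ k)‖ := Int.floor_le _
      have h2 : t / ‖g (φ k)‖ < m k + 1 := Int.lt_floor_add_one _
      rw [Real.norm_eq_abs, abs_le]
      constructor
      · nlinarith [(div_lt_iff₀ h0).mp h2]
      · nlinarith [(le_div_iff₀ h0).mp h1]
    have := hd.add_const t
    simpa using this
  have hlim : Tendsto (fun k => (m k : ℝ) • g (φ k)) atTop (𝓝 (t • v)) := by
    have heq : ∀ k, (m k : ℝ) • g (φ k) = ((m k : ℝ) * ‖g (φ k)‖) • u (φ k) := by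
      intro k
      simp only [u, smul_smul]
      congr 1
      rw [mul_assoc, mul_inv_cancel₀ (hgnorm (φ k)).ne', mul_one]
    simp_rw [heq]
    exact ha.smul hconv
  have hmem : ∀ k, (m k : ℝ) • g (φ k) ∈ G := by
    intro k
    have : (m k : ℝ) • g (φ k) = m k • g (φ k) := by
      simp [Int.cast_smul_eq_zsmul ℝ]
    rw [this]
    exact zsmul_mem (hgG _) _
  exact hG.mem_of_tendsto hlim (Eventually.of_forall hmem)



/-- Structure theorem consequence: every proper closed subgroup of a finite-dimensional
real normed space is annihilated modulo `ℤ` by a nonzero linear functional. -/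
lemma exists_int_dual_aux : ∀ (d : ℕ) (E : Type) [NormedAddCommGroup E] [NormedSpace ℝ E]
    [FiniteDimensional ℝ E], finrank ℝ E = d →
    ∀ (G : AddSubgroup E), IsClosed (G : Set E) → (G : Set E) ≠ Set.univ →
    ∃ f : E →ₗ[ℝ] ℝ, f ≠ 0 ∧ ∀ g ∈ G, ∃ m : ℤ, f g = m := by
  intro d
  induction d using Nat.strong_induction_on with
  | _ d ih =>
  intro E _ _ _ hd G hGc hGne
  have hd0 : 0 < d := by
    rcases Nat.eq_zero_or_pos d with h0 | h
    swap
    · exact h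
    · exfalso
      rw [h0, finrank_zero_iff] at hd
      apply hGne
      ext x
      simp only [Set.mem_univ, iff_true, SetLike.mem_coe]
      have : x = 0 := Subsingleton.elim _ _
      rw [this]; exact G.zero_mem
  by_cases hdisc : ∀ ε : ℝ, 0 < ε → ∃ g ∈ G, g ≠ 0 ∧ ‖g‖ < ε
  · -- G contains a line: quotient by it and use induction
    obtain ⟨u, hu0, huG⟩ := exists_line_of_not_discrete G hGc hdisc
    set S : Submodule ℝ E := Submodule.span ℝ {u} with hS
    have hSG : (S : Set E) ⊆ (G : Set E) := by
      intro x hx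
      rw [SetLike.mem_coe, Submodule.mem_span_singleton] at hx
      obtain ⟨t, rfl⟩ := hx
      exact huG t
    haveI hScl : IsClosed (S : Set E) := Submodule.closed_of_finiteDimensional S
    set π := S.mkQ with hπ
    have hsat : ∀ x y : E, π x = π y → y ∈ G → x ∈ G := by
      intro x y hxy hy
      have : x - y ∈ S := by
        rwa [hπ, Submodule.mkQ_apply, Submodule.mkQ_apply, Submodule.Quotient.eq] at hxy
      have : x - y ∈ G := hSG this
      simpa using G.add_mem this hy
    set G' : AddSubgroup (E ⧸ S) := G.map π.toAddMonoidHom with hG'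
    have hG'img : (G' : Set (E ⧸ S)) = π '' (G : Set E) := by
      rw [hG']; rfl
    have hopen : IsOpenMap π := by
      have := QuotientAddGroup.isOpenMap_coe (G := E) (N := S.toAddSubgroup)
      exact this
    have hsurj : Function.Surjective π := Submodule.Quotient.mk_surjective S
    have hG'cl : IsClosed (G' : Set (E ⧸ S)) := by
      rw [← isOpen_compl_iff]
      have hcompl : (G' : Set (E ⧸ S))ᶜ = π '' ((G : Set E)ᶜ) := by
        ext z
        obtain ⟨x, rfl⟩ := hsurj z
        simp only [Set.mem_compl_iff, hG'img, Set.mem_image]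
        constructor
        · intro hx
          exact ⟨x, fun hxG => hx ⟨x, hxG, rfl⟩, rfl⟩
        · rintro ⟨y, hy, hyx⟩ ⟨w, hw, hwx⟩
          exact hy (hsat y w (by rw [hyx, hwx]) hw)
      rw [hcompl]
      exact hopen _ (hGc.isOpen_compl)
    have hG'ne : (G' : Set (E ⧸ S)) ≠ Set.univ := by
      intro hcon
      apply hGne
      ext x
      simp only [Set.mem_univ, iff_true, SetLike.mem_coe]
      have hmem : π x ∈ (G' : Set (E ⧸ S)) := by rw [hcon]; trivial
      obtain ⟨g, hg, hgx⟩ := AddSubgroup.mem_map.mp hmem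
      exact hsat x g hgx.symm hg
    have hrank : finrank ℝ (E ⧸ S) < d := by
      have h1 : finrank ℝ (E ⧸ S) + finrank ℝ S = finrank ℝ E :=
        Submodule.finrank_quotient_add_finrank S
      have h2 : finrank ℝ S = 1 := finrank_span_singleton hu0
      omega
    obtain ⟨f', hf'0, hf'int⟩ := ih _ hrank (E ⧸ S) rfl G' hG'cl hG'ne
    refine ⟨f'.comp π, ?_, ?_⟩
    · intro hcon
      apply hf'0
      apply LinearMap.ext
      intro z
      obtain ⟨x, rfl⟩ := hsurj z
      have := DFunLike.congr_fun hcon x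
      simpa using this
    · intro g hg
      exact hf'int (π g) ⟨g, hg, rfl⟩
  · -- G is discrete
    push_neg at hdisc
    obtain ⟨ε, hε, hsmall⟩ := hdisc
    set L : Submodule ℤ E := AddSubgroup.toIntSubmodule G with hL
    haveI hLd : DiscreteTopology L := by
      rw [discreteTopology_iff_isOpen_singleton_zero]
      have key : ({0} : Set L) = (Subtype.val) ⁻¹' (Metric.ball (0 : E) ε) := by
        ext x
        simp only [Set.mem_singleton_iff, Set.mem_preimage, Metric.mem_ball, dist_zero_right]
        constructor
        · intro h; rw [h]; simpa using hε
        · intro h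
          by_contra hx0
          have hxne : (x : E) ≠ 0 := fun hc => hx0 (Subtype.ext hc)
          have hxG : (x : E) ∈ G := x.2
          exact absurd h (not_lt.mpr (hsmall x hxG hxne))
      rw [key]
      exact continuous_subtype_val.isOpen_preimage _ Metric.isOpen_ball
    by_cases hspan : Submodule.span ℝ (L : Set E) = ⊤
    · -- G is a full lattice: integer coordinate functional
      haveI : IsZLattice ℝ L := ⟨hspan⟩
      haveI : Module.Finite ℤ L := inferInstance
      haveI : Module.Free ℤ L := inferInstance
      set b₀ := Module.Free.chooseBasis ℤ L with hb₀
      set ι := Module.Free.ChooseBasisIndex ℤ L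
      have hcard : Fintype.card ι = d := by
        rw [← finrank_eq_card_chooseBasisIndex, ZLattice.rank ℝ L, hd]
      haveI : Nonempty ι := by
        rw [← Fintype.card_pos_iff, hcard]; exact hd0
      set i₀ : ι := Classical.arbitrary ι
      set b := b₀.ofZLatticeBasis ℝ L with hb
      refine ⟨b.coord i₀, ?_, ?_⟩
      · intro hcon
        have := DFunLike.congr_fun hcon (b i₀)
        simp [Basis.coord_apply, Basis.repr_self] at this
      · intro g hg
        have hgL : g ∈ L := hg
        refine ⟨b₀.repr ⟨g, hgL⟩ i₀, ?_⟩
        have := b₀.ofZLatticeBasis_repr_apply ℝ L ⟨g, hgL⟩ i₀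
        rw [Basis.coord_apply, ← hb] at *
        exact_mod_cast this
    · -- the span is proper: kill it
      have hlt : Submodule.span ℝ (L : Set E) < ⊤ := lt_top_iff_ne_top.mpr hspan
      obtain ⟨f, hf0, hfbot⟩ :=
        Submodule.exists_dual_map_eq_bot_of_lt_top hlt inferInstance
      refine ⟨f, hf0, fun g hg => ⟨0, ?_⟩⟩
      have : f g ∈ (Submodule.span ℝ (L : Set E)).map f := ⟨g, Submodule.subset_span hg, rfl⟩
      rw [hfbot] at this
      simpa using this

variable {n : ℕ}

/-- Multiplication by an integer, as hom of `AddCircle 1`. -/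
def zmulHom (m : ℤ) : AddCircle (1:ℝ) →+ AddCircle (1:ℝ) where
  toFun x := m • x
  map_zero' := smul_zero m
  map_add' x y := smul_add m x y

/-- The character of the torus attached to an integer vector. -/
def chi (k : Fin n → ℤ) : (Fin n → AddCircle (1:ℝ)) →+ AddCircle (1:ℝ) :=
  ∑ i : Fin n, (zmulHom (k i)).comp (Pi.evalAddMonoidHom (fun _ => AddCircle (1:ℝ)) i)

lemma chi_apply (k : Fin n → ℤ) (x : Fin n → AddCircle (1:ℝ)) :
    chi k x = ∑ i, k i • x i := by
  simp [chi, zmulHom, AddMonoidHom.finset_sum_apply, Pi.evalAddMonoidHom]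

lemma chi_continuous (k : Fin n → ℤ) : Continuous (chi k) := by
  have : (chi k : (Fin n → AddCircle (1:ℝ)) → AddCircle (1:ℝ)) =
      fun x => ∑ i, k i • x i := funext fun x => chi_apply k x
  rw [this]
  exact continuous_finset_sum _ fun i _ => (continuous_zsmul (k i)).comp (continuous_apply i)

/-- `chi` as an additive homomorphism in the integer vector. -/
def chiHom : (Fin n → ℤ) →+ ((Fin n → AddCircle (1:ℝ)) →+ AddCircle (1:ℝ)) where
  toFun := chi
  map_zero' := by
    ext x
    simp [chi_apply]
  map_add' k k' := by
    ext x
    simp [chi_apply, add_zsmul, Finset.sum_add_distrib]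

/-- The quotient map from `ℝⁿ` to the torus. -/
def piQuot (n : ℕ) : (Fin n → ℝ) →+ (Fin n → AddCircle (1:ℝ)) where
  toFun v := fun i => (v i : AddCircle (1:ℝ))
  map_zero' := by funext i; simp
  map_add' v w := by funext i; simp

lemma continuous_piQuot : Continuous (piQuot n) :=
  continuous_pi fun i => (AddCircle.continuous_mk' 1).comp (continuous_apply i)

lemma surjective_piQuot : Function.Surjective (piQuot n) := by
  intro x
  have h : ∀ i, ∃ r : ℝ, (r : AddCircle (1:ℝ)) = x i := fun i =>
    Quotient.exists_rep (x i)
  choose v hv using h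
  exact ⟨v, funext hv⟩

/-- The coercion `ℝ → AddCircle 1` as an `AddMonoidHom`. -/
def rQuot : ℝ →+ AddCircle (1:ℝ) := QuotientAddGroup.mk' (AddSubgroup.zmultiples (1:ℝ))

lemma rQuot_apply (x : ℝ) : rQuot x = (x : AddCircle (1:ℝ)) := rfl

lemma int_coe_eq_zero (m : ℤ) : ((m : ℝ) : AddCircle (1:ℝ)) = 0 := by
  rw [AddCircle.coe_eq_zero_iff]
  exact ⟨m, by simp⟩

lemma chi_piQuot (k : Fin n → ℤ) (v : Fin n → ℝ) :
    chi k (piQuot n v) = ((∑ i, (k i : ℝ) * v i : ℝ) : AddCircle (1:ℝ)) := by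
  rw [chi_apply]
  rw [← rQuot_apply, map_sum rQuot]
  apply Finset.sum_congr rfl
  intro i _
  have : (piQuot n v) i = rQuot (v i) := rfl
  rw [this, ← map_zsmul rQuot]
  congr 1
  simp [zsmul_eq_mul]

/-- A character vanishing on a topologically generating set vanishes. -/
lemma chi_eq_zero_of_generating {S : Set (Fin n → AddCircle (1:ℝ))}
    (hS : closure ((AddSubgroup.closure S : AddSubgroup (Fin n → AddCircle (1:ℝ))) :
      Set (Fin n → AddCircle (1:ℝ))) = Set.univ)
    {k : Fin n → ℤ} (h : ∀ x ∈ S, chi k x = 0) : ∀ x, chi k x = 0 := by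
  set K : AddSubgroup (Fin n → AddCircle (1:ℝ)) := AddSubgroup.comap (chi k) ⊥ with hK
  have hKc : IsClosed (K : Set (Fin n → AddCircle (1:ℝ))) := by
    have : (K : Set (Fin n → AddCircle (1:ℝ))) = (chi k) ⁻¹' {0} := by
      ext x; simp [hK, AddSubgroup.mem_comap]
    rw [this]
    exact IsClosed.preimage (chi_continuous k) isClosed_singleton
  have h1 : AddSubgroup.closure S ≤ K := by
    rw [AddSubgroup.closure_le]
    intro x hx
    simp only [SetLike.mem_coe, hK, AddSubgroup.mem_comap, AddSubgroup.mem_bot]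
    exact h x hx
  have h2 : closure ((AddSubgroup.closure S : AddSubgroup (Fin n → AddCircle (1:ℝ))) : Set (Fin n → AddCircle (1:ℝ))) ⊆ (K : Set _) :=
    closure_minimal h1 hKc
  rw [hS] at h2
  intro x
  have : x ∈ K := h2 (Set.mem_univ x)
  simpa [hK, AddSubgroup.mem_comap] using this

lemma half_ne_zero_circ : (((1:ℝ)/2 : ℝ) : AddCircle (1:ℝ)) ≠ 0 := by
  rw [Ne, AddCircle.coe_eq_zero_iff]
  rintro ⟨m, hm⟩
  rw [zsmul_eq_mul, mul_one] at hm
  have h2 : (2 * m : ℤ) = 1 := by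
    have : (2 * (m:ℝ)) = 1 := by rw [hm]; ring
    exact_mod_cast this
  omega

/-- A character vanishing identically is trivial. -/
lemma k_eq_zero_of_chi_eq_zero {k : Fin n → ℤ} (h : ∀ x, chi k x = 0) : k = 0 := by
  funext i
  simp only [Pi.zero_apply]
  by_contra hki
  have hki' : (k i : ℝ) ≠ 0 := Int.cast_ne_zero.mpr hki
  set c : AddCircle (1:ℝ) := (((1:ℝ)/(2 * k i) : ℝ) : AddCircle (1:ℝ)) with hc
  have hz := h (Pi.single (M := fun _ => AddCircle (1:ℝ)) i c)
  rw [chi_apply] at hz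
  have hsum : (∑ j : Fin n, k j • (Pi.single (M := fun _ => AddCircle (1:ℝ)) i c) j : AddCircle (1:ℝ)) = k i • c := by
    rw [Finset.sum_eq_single_of_mem i (Finset.mem_univ i) (fun j _ hj => by
      rw [Pi.single_eq_of_ne hj]; simp), Pi.single_eq_same]
  rw [hsum] at hz
  apply half_ne_zero_circ
  rw [hc, ← rQuot_apply, ← map_zsmul rQuot] at hz
  rw [← rQuot_apply]
  convert hz using 2
  rw [zsmul_eq_mul]
  field_simp

/-- Kronecker-type theorem (hard direction): a non-dense subgroup of the torus generated by
`S` is annihilated by a nontrivial character. -/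
lemma exists_char_of_not_dense (S : Set (Fin n → AddCircle (1:ℝ)))
    (h : closure ((AddSubgroup.closure S : AddSubgroup (Fin n → AddCircle (1:ℝ))) :
      Set (Fin n → AddCircle (1:ℝ))) ≠ Set.univ) :
    ∃ k : Fin n → ℤ, k ≠ 0 ∧ ∀ x ∈ S, chi k x = 0 := by
  set H : AddSubgroup (Fin n → AddCircle (1:ℝ)) :=
    (AddSubgroup.closure S).topologicalClosure with hH
  have hHcoe : (H : Set (Fin n → AddCircle (1:ℝ)))
      = closure ((AddSubgroup.closure S : AddSubgroup (Fin n → AddCircle (1:ℝ))) : Set _) := rfl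
  set G : AddSubgroup (Fin n → ℝ) := AddSubgroup.comap (piQuot n) H with hG
  have hGc : IsClosed (G : Set (Fin n → ℝ)) := by
    have : (G : Set (Fin n → ℝ)) = (piQuot n) ⁻¹' (H : Set _) := rfl
    rw [this, hHcoe]
    exact IsClosed.preimage continuous_piQuot isClosed_closure
  have hGne : (G : Set (Fin n → ℝ)) ≠ Set.univ := by
    intro hcon
    apply h
    rw [← hHcoe]
    ext x
    simp only [Set.mem_univ, iff_true]
    obtain ⟨v, rfl⟩ := surjective_piQuot x
    have : v ∈ G := by rw [← SetLike.mem_coe, hcon]; trivial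
    exact this
  obtain ⟨f, hf0, hfint⟩ := exists_int_dual_aux (finrank ℝ (Fin n → ℝ)) (Fin n → ℝ) rfl G hGc hGne
  have hsingle : ∀ i : Fin n, (Pi.single (M := fun _ => ℝ) i 1) ∈ G := by
    intro i
    have : piQuot n (Pi.single (M := fun _ => ℝ) i 1) = 0 := by
      funext j
      show ((Pi.single (M := fun _ => ℝ) i 1 j : ℝ) : AddCircle (1:ℝ)) = 0
      rcases eq_or_ne j i with rfl | hj
      · rw [Pi.single_eq_same]
        exact_mod_cast int_coe_eq_zero 1
      · rw [Pi.single_eq_of_ne hj]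
        exact_mod_cast int_coe_eq_zero 0
    show piQuot n _ ∈ H
    rw [this]
    exact H.zero_mem
  have hki : ∀ i : Fin n, ∃ m : ℤ, f (Pi.single (M := fun _ => ℝ) i 1) = m :=
    fun i => hfint _ (hsingle i)
  choose k hk using hki
  have hfv : ∀ v : Fin n → ℝ, f v = ∑ i, v i * k i := by
    intro v
    have hv : v = ∑ i, v i • Pi.single (M := fun _ => ℝ) i 1 := by
      funext j
      rw [Finset.sum_apply]
      rw [Finset.sum_eq_single_of_mem j (Finset.mem_univ j) (fun i _ hij => by
        simp [Pi.single_eq_of_ne hij.symm])]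
      simp
    conv_lhs => rw [hv]
    rw [map_sum]
    apply Finset.sum_congr rfl
    intro i _
    rw [map_smul, hk i]
    simp [smul_eq_mul]
  refine ⟨k, ?_, ?_⟩
  · intro hcon
    apply hf0
    apply LinearMap.ext
    intro v
    rw [hfv v]
    simp [hcon]
  · intro x hx
    obtain ⟨v, rfl⟩ := surjective_piQuot x
    have hvG : v ∈ G := by
      show piQuot n v ∈ H
      exact (AddSubgroup.le_topologicalClosure _) (AddSubgroup.subset_closure hx)
    obtain ⟨m, hm⟩ := hfint v hvG
    rw [chi_piQuot]
    have : (∑ i, (k i : ℝ) * v i) = (m : ℝ) := by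
      rw [← hm, hfv]
      apply Finset.sum_congr rfl
      intros; ring
    rw [this]
    exact int_coe_eq_zero m

lemma chi_add_apply (a b : Fin n → ℤ) (y : Fin n → AddCircle (1:ℝ)) :
    chi (a + b) y = chi a y + chi b y := by
  simp [chi_apply, add_zsmul, Finset.sum_add_distrib]

lemma chi_zsmul_apply (c : ℤ) (k : Fin n → ℤ) (y : Fin n → AddCircle (1:ℝ)) :
    chi (c • k) y = c • chi k y := by
  simp only [chi_apply, Pi.smul_apply, smul_eq_mul, mul_zsmul]
  rw [Finset.smul_sum]

lemma chi_zero_apply (y : Fin n → AddCircle (1:ℝ)) : chi (0 : Fin n → ℤ) y = 0 := by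
  simp [chi_apply]

lemma chi_finset_sum_apply {ι : Type*} [DecidableEq ι] (s : Finset ι) (c : ι → ℤ)
    (kk : ι → (Fin n → ℤ)) (y : Fin n → AddCircle (1:ℝ)) :
    chi (∑ x ∈ s, c x • kk x) y = ∑ x ∈ s, c x • chi (kk x) y := by
  induction s using Finset.induction with
  | empty => simp [chi_zero_apply]
  | insert _ _ hx ih =>
      rw [Finset.sum_insert hx, Finset.sum_insert hx, chi_add_apply, chi_zsmul_apply, ih]

set_option maxHeartbeats 1000000 in
/-- Upper bound: an irredundant topologically generating subset has at most `n` elements. -/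
lemma card_le_of_irredundant (X : Finset (Fin n → AddCircle (1 : ℝ)))
    (hgen : closure ((AddSubgroup.closure (X : Set (Fin n → AddCircle (1 : ℝ)))) :
        Set (Fin n → AddCircle (1 : ℝ))) = Set.univ)
    (hirr : ∀ Y : Finset (Fin n → AddCircle (1 : ℝ)), Y ⊂ X →
        closure ((AddSubgroup.closure (Y : Set (Fin n → AddCircle (1 : ℝ)))) :
          Set (Fin n → AddCircle (1 : ℝ))) ≠ Set.univ) :
    X.card ≤ n := by
  classical
  have hchar : ∀ x : {x // x ∈ X}, ∃ k : Fin n → ℤ, k ≠ 0 ∧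
      ∀ y ∈ X.erase ↑x, chi k y = 0 := by
    intro x
    have hss : X.erase ↑x ⊂ X := Finset.erase_ssubset x.2
    have hne := hirr (X.erase ↑x) hss
    obtain ⟨k, hk0, hk⟩ := exists_char_of_not_dense _ hne
    exact ⟨k, hk0, fun y hy => hk y (by exact_mod_cast hy)⟩
  choose K hK0 hKvan using hchar
  have hli : LinearIndependent ℤ K := by
    rw [linearIndependent_iff']
    intro s g hsum x₀ hx₀
    -- the character `g x₀ • K x₀` vanishes on all of `X`
    have hvan : ∀ y ∈ (X : Set (Fin n → AddCircle (1:ℝ))), chi (g x₀ • K x₀) y = 0 := by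
      intro y hy
      rcases eq_or_ne y ↑x₀ with rfl | hne
      · -- evaluate the vanishing sum at `↑x₀`
        have h0 : chi (∑ x ∈ s, g x • K x) (↑x₀ : Fin n → AddCircle (1:ℝ)) = 0 := by
          rw [hsum, chi_zero_apply]
        rw [chi_finset_sum_apply] at h0
        rw [Finset.sum_eq_single_of_mem x₀ hx₀ (fun x hxs hxne => by
          have hyx : (↑x₀ : Fin n → AddCircle (1:ℝ)) ∈ X.erase ↑x :=
            Finset.mem_erase.mpr ⟨fun hc => hxne (Subtype.ext hc.symm), x₀.2⟩
          rw [hKvan x _ hyx, smul_zero])] at h0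
        rw [chi_zsmul_apply]
        exact h0
      · rw [chi_zsmul_apply]
        have : chi (K x₀) y = 0 := hKvan x₀ y (Finset.mem_erase.mpr ⟨hne, hy⟩)
        rw [this, smul_zero]
    have hall := chi_eq_zero_of_generating hgen hvan
    have hzero : g x₀ • K x₀ = 0 := k_eq_zero_of_chi_eq_zero hall
    obtain ⟨i, hi⟩ := Function.ne_iff.mp (hK0 x₀)
    have := congrFun hzero i
    simp only [Pi.smul_apply, smul_eq_mul, Pi.zero_apply, mul_eq_zero] at this
    rcases this with h | h
    · exact h
    · exact absurd h hi
  have hcard := hli.fintype_card_le_finrank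
  rwa [Fintype.card_coe, Module.finrank_fintype_fun_eq_card, Fintype.card_fin] at hcard

/-- The class of `√2` in the circle. -/
def thetaC : AddCircle (1:ℝ) := ((Real.sqrt 2 : ℝ) : AddCircle (1:ℝ))

lemma thetaC_ne_zero : thetaC ≠ 0 := by
  rw [thetaC, Ne, AddCircle.coe_eq_zero_iff]
  rintro ⟨m, hm⟩
  rw [zsmul_eq_mul, mul_one] at hm
  exact irrational_sqrt_two.ne_int m hm.symm

/-- The subgroup generated by an irrational point is dense in the circle. -/
lemma dense_closure_thetaC :
    closure ((AddSubgroup.closure ({thetaC} : Set (AddCircle (1:ℝ))) :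
      AddSubgroup (AddCircle (1:ℝ))) : Set (AddCircle (1:ℝ))) = Set.univ := by
  set S₁ : AddSubgroup ℝ := AddSubgroup.closure ({Real.sqrt 2, 1} : Set ℝ) with hS₁
  have hθ : Real.sqrt 2 ∈ S₁ := AddSubgroup.subset_closure (by simp)
  have h1 : (1:ℝ) ∈ S₁ := AddSubgroup.subset_closure (by simp)
  have hdense : Dense (S₁ : Set ℝ) := by
    rcases S₁.dense_or_cyclic with hd | ⟨a, ha⟩
    · exact hd
    · exfalso
      rw [ha, AddSubgroup.mem_closure_singleton] at hθ h1
      obtain ⟨m, hm⟩ := hθ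
      obtain ⟨l, hl⟩ := h1
      have hl0 : l ≠ 0 := by
        rintro rfl
        simp at hl
      have hla : a = 1 / l := by
        rw [zsmul_eq_mul] at hl
        field_simp
        rw [mul_comm]
        exact hl
      have : Real.sqrt 2 = ((m / l : ℚ) : ℝ) := by
        rw [zsmul_eq_mul] at hm
        rw [← hm, hla]
        push_cast
        ring
      exact Rat.not_irrational _ (this ▸ irrational_sqrt_two)
  -- push density through the quotient map
  have hsub : rQuot '' (S₁ : Set ℝ) ⊆
      ((AddSubgroup.closure ({thetaC} : Set (AddCircle (1:ℝ)))) : Set (AddCircle (1:ℝ))) := by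
    have hmap : AddSubgroup.map rQuot S₁ ≤ AddSubgroup.closure {thetaC} := by
      rw [hS₁, AddMonoidHom.map_closure]
      apply (AddSubgroup.closure_le _).mpr
      intro z hz
      simp only [Set.image_insert_eq, Set.image_singleton, Set.mem_insert_iff,
        Set.mem_singleton_iff] at hz
      rcases hz with rfl | rfl
      · exact AddSubgroup.subset_closure rfl
      · have : rQuot (1:ℝ) = 0 := by
          rw [rQuot_apply]
          exact_mod_cast int_coe_eq_zero 1
        rw [this]
        exact AddSubgroup.zero_mem _
    intro z hz
    obtain ⟨w, hw, rfl⟩ := hz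
    exact hmap ⟨w, hw, rfl⟩
  have hcont : Continuous rQuot := continuous_quotient_mk'
  have hsurj : Function.Surjective rQuot := Quotient.exists_rep
  rw [Set.eq_univ_iff_forall]
  intro z
  have h1' : z ∈ closure (rQuot '' (S₁ : Set ℝ)) := by
    have himg : rQuot '' closure (S₁ : Set ℝ) ⊆ closure (rQuot '' (S₁ : Set ℝ)) :=
      image_closure_subset_closure_image hcont
    rw [hdense.closure_eq] at himg
    obtain ⟨w, rfl⟩ := hsurj z
    exact himg ⟨w, trivial, rfl⟩
  exact closure_mono hsub h1'

/-- `Pi.single i` as a continuous `AddMonoidHom` into the torus. -/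
lemma continuous_single_hom (i : Fin n) :
    Continuous (fun c : AddCircle (1:ℝ) => Pi.single (M := fun _ => AddCircle (1:ℝ)) i c) := by
  apply continuous_pi
  intro j
  rcases eq_or_ne j i with rfl | hj
  · simp only [Pi.single_eq_same]
    exact continuous_id
  · simp only [Pi.single_eq_of_ne hj]
    exact continuous_const

lemma single_mem_hom (i : Fin n) (c₁ c₂ : AddCircle (1:ℝ)) :
    Pi.single (M := fun _ => AddCircle (1:ℝ)) i (c₁ + c₂) =
      Pi.single i c₁ + Pi.single i c₂ := by
  funext j
  rcases eq_or_ne j i with rfl | hj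
  · simp
  · simp [Pi.single_eq_of_ne hj]

/-- The standard irredundant generating set of size `n`. -/
def stdGen (n : ℕ) : Finset (Fin n → AddCircle (1:ℝ)) :=
  Finset.image (fun i => Pi.single (M := fun _ => AddCircle (1:ℝ)) i thetaC) Finset.univ

lemma single_injective :
    Function.Injective (fun i : Fin n => Pi.single (M := fun _ => AddCircle (1:ℝ)) i thetaC) := by
  intro i j hij
  by_contra hne
  have h2 : Pi.single (M := fun _ => AddCircle (1:ℝ)) i thetaC i
      = Pi.single (M := fun _ => AddCircle (1:ℝ)) j thetaC i := congrFun hij i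
  rw [Pi.single_eq_same, Pi.single_eq_of_ne hne] at h2
  exact thetaC_ne_zero h2

lemma stdGen_card : (stdGen n).card = n := by
  rw [stdGen, Finset.card_image_of_injective _ single_injective, Finset.card_univ,
    Fintype.card_fin]

lemma stdGen_generates :
    closure ((AddSubgroup.closure ((stdGen n : Finset _) : Set (Fin n → AddCircle (1 : ℝ)))) :
      Set (Fin n → AddCircle (1 : ℝ))) = Set.univ := by
  set H : AddSubgroup (Fin n → AddCircle (1:ℝ)) :=
    (AddSubgroup.closure ((stdGen n : Finset _) : Set (Fin n → AddCircle (1:ℝ)))).topologicalClosure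
    with hH
  have hHcl : IsClosed (H : Set (Fin n → AddCircle (1:ℝ))) :=
    AddSubgroup.isClosed_topologicalClosure _
  have hsingle : ∀ (i : Fin n) (c : AddCircle (1:ℝ)),
      Pi.single (M := fun _ => AddCircle (1:ℝ)) i c ∈ H := by
    intro i c
    set K : AddSubgroup (AddCircle (1:ℝ)) :=
      { carrier := {c | Pi.single (M := fun _ => AddCircle (1:ℝ)) i c ∈ H},
        zero_mem' := by simp only [Set.mem_setOf_eq, Pi.single_zero]; exact H.zero_mem,
        add_mem' := fun {a b} ha hb => by
          simp only [Set.mem_setOf_eq] at *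
          rw [single_mem_hom]
          exact H.add_mem ha hb,
        neg_mem' := fun {a} ha => by
          simp only [Set.mem_setOf_eq] at *
          have : Pi.single (M := fun _ => AddCircle (1:ℝ)) i (-a) =
              -Pi.single (M := fun _ => AddCircle (1:ℝ)) i a := by
            funext j
            rcases eq_or_ne j i with rfl | hj
            · simp
            · simp [Pi.single_eq_of_ne hj]
          rw [this]
          exact H.neg_mem ha } with hK
    have hKcl : IsClosed (K : Set (AddCircle (1:ℝ))) := by
      have : (K : Set (AddCircle (1:ℝ))) =
          (fun c => Pi.single (M := fun _ => AddCircle (1:ℝ)) i c) ⁻¹'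
            (H : Set (Fin n → AddCircle (1:ℝ))) := rfl
      rw [this]
      exact IsClosed.preimage (continuous_single_hom i) hHcl
    have hθK : thetaC ∈ K := by
      show Pi.single i thetaC ∈ H
      apply AddSubgroup.le_topologicalClosure
      apply AddSubgroup.subset_closure
      simp only [stdGen, Finset.coe_image, Finset.coe_univ, Set.image_univ, Set.mem_range]
      exact ⟨i, rfl⟩
    have hclos : AddSubgroup.closure ({thetaC} : Set (AddCircle (1:ℝ))) ≤ K :=
      (AddSubgroup.closure_le _).mpr (by simpa using hθK)
    have : (Set.univ : Set (AddCircle (1:ℝ))) ⊆ (K : Set (AddCircle (1:ℝ))) := by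
      rw [← dense_closure_thetaC]
      exact closure_minimal hclos hKcl
    exact this (Set.mem_univ c)
  have hmemH : ∀ x : Fin n → AddCircle (1:ℝ), x ∈ H := by
    intro x
    have hx : x = ∑ i, Pi.single i (x i) := by
      rw [Finset.univ_sum_single]
    rw [hx]
    exact AddSubgroup.sum_mem H (fun i _ => hsingle i (x i))
  have : (H : Set (Fin n → AddCircle (1:ℝ))) = Set.univ :=
    Set.eq_univ_iff_forall.mpr hmemH
  exact this

lemma stdGen_irredundant (Y : Finset (Fin n → AddCircle (1 : ℝ))) (hY : Y ⊂ stdGen n) :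
    closure ((AddSubgroup.closure ((Y : Finset _) : Set (Fin n → AddCircle (1 : ℝ)))) :
      Set (Fin n → AddCircle (1 : ℝ))) ≠ Set.univ := by
  obtain ⟨x, hxX, hxY⟩ := Finset.exists_of_ssubset hY
  rw [stdGen, Finset.mem_image] at hxX
  obtain ⟨i, -, rfl⟩ := hxX
  set C : AddSubgroup (Fin n → AddCircle (1:ℝ)) :=
    AddSubgroup.comap (Pi.evalAddMonoidHom (fun _ => AddCircle (1:ℝ)) i) ⊥ with hC
  have hCcl : IsClosed (C : Set (Fin n → AddCircle (1:ℝ))) := by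
    have : (C : Set (Fin n → AddCircle (1:ℝ))) = (fun z => z i) ⁻¹' {0} := by
      ext z
      simp [hC, AddSubgroup.mem_comap, Pi.evalAddMonoidHom]
    rw [this]
    exact IsClosed.preimage (continuous_apply i) isClosed_singleton
  have hYC : AddSubgroup.closure ((Y : Finset _) : Set (Fin n → AddCircle (1:ℝ))) ≤ C := by
    apply (AddSubgroup.closure_le _).mpr
    intro z hz
    have hzX : z ∈ stdGen n := hY.1 hz
    rw [stdGen, Finset.mem_image] at hzX
    obtain ⟨j, -, rfl⟩ := hzX
    have hji : j ≠ i := by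
      rintro rfl
      exact hxY hz
    have hz0 : Pi.single (M := fun _ => AddCircle (1:ℝ)) j thetaC i = 0 :=
      Pi.single_eq_of_ne (Ne.symm hji) _
    simp only [SetLike.mem_coe, hC, AddSubgroup.mem_comap, AddSubgroup.mem_bot,
      Pi.evalAddMonoidHom_apply]
    exact hz0
  intro hcon
  have hsub : closure ((AddSubgroup.closure ((Y : Finset _) :
      Set (Fin n → AddCircle (1:ℝ)))) : Set _) ⊆ (C : Set _) :=
    closure_minimal (X := Fin n → AddCircle (1:ℝ)) hYC hCcl
  rw [hcon] at hsub
  have hmem : Pi.single (M := fun _ => AddCircle (1:ℝ)) i thetaC ∈ C := hsub (Set.mem_univ _)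
  have h0 : Pi.single (M := fun _ => AddCircle (1:ℝ)) i thetaC i = 0 := by
    simpa only [hC, AddSubgroup.mem_comap, AddSubgroup.mem_bot,
      Pi.evalAddMonoidHom_apply] using hmem
  rw [Pi.single_eq_same] at h0
  exact thetaC_ne_zero h0

end

/-- Every finite irredundant topologically generating set of the torus `(ℝ/ℤ)ⁿ` has size
at most `n`, and there is one of size exactly `n`. -/
theorem stmt5 (n : ℕ) :
    (∀ X : Finset (Fin n → AddCircle (1 : ℝ)),
      closure ((AddSubgroup.closure (X : Set (Fin n → AddCircle (1 : ℝ)))) :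
        Set (Fin n → AddCircle (1 : ℝ))) = Set.univ →
      (∀ Y : Finset (Fin n → AddCircle (1 : ℝ)), Y ⊂ X →
        closure ((AddSubgroup.closure (Y : Set (Fin n → AddCircle (1 : ℝ)))) :
          Set (Fin n → AddCircle (1 : ℝ))) ≠ Set.univ) →
      X.card ≤ n) ∧
    ∃ X : Finset (Fin n → AddCircle (1 : ℝ)), X.card = n ∧
      closure ((AddSubgroup.closure (X : Set (Fin n → AddCircle (1 : ℝ)))) :
        Set (Fin n → AddCircle (1 : ℝ))) = Set.univ ∧
      ∀ Y : Finset (Fin n → AddCircle (1 : ℝ)), Y ⊂ X →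
        closure ((AddSubgroup.closure (Y : Set (Fin n → AddCircle (1 : ℝ)))) :
          Set (Fin n → AddCircle (1 : ℝ))) ≠ Set.univ := by
  constructor
  · intro X hgen hirr
    exact card_le_of_irredundant X hgen hirr
  · exact ⟨stdGen n, stdGen_card, stdGen_generates, stdGen_irredundant⟩
end

section
/- There exist three elements of order 2 in SO(3) (rotations by angle π) that topologically generate SO(3), and this generating set is irredundant: no two of them topologically generate SO(3). Hence m(SO(3)) ≥ 3. -/
/-
Let `a`, `b`, `c` be the half-turns about `e₁`, `(cos 1, sin 1, 0)` and `(cos 1, 0, -sin 1)`.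
Then `b * a` and `c * a` are the rotations by the angle `2` about the `z`- and `y`-axes. As
`2 / 2π` is irrational, the closure of the group they generate contains both circle subgroups,
hence all of `SO(3)` by the Euler decomposition `g = R_z(α) R_y(β) R_z(γ)`. Conversely, any two
half-turns of `ℝ³` reverse a common nonzero vector `v` orthogonal to both axes, so they lie in
the closed proper subgroup of rotations preserving the line `ℝ v`. Irredundance then also forces
`a`, `b`, `c` to be distinct and nontrivial.
-/

/-- `SO(3)`: the subgroup of the (3×3 real) orthogonal group of elements of determinant 1. -/
def SO3 : Subgroup (Matrix.orthogonalGroup (Fin 3) ℝ) :=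
  MonoidHom.ker
    (Matrix.detMonoidHom.comp (Submonoid.subtype (Matrix.orthogonalGroup (Fin 3) ℝ)))

open Matrix Real

theorem exists_polar (x y : ℝ) :
    ∃ θ, √(x ^ 2 + y ^ 2) * cos θ = x ∧ √(x ^ 2 + y ^ 2) * sin θ = y := by
  refine ⟨Complex.arg (x + y * Complex.I), ?_, ?_⟩
  · simpa [Complex.norm_add_mul_I] using Complex.norm_mul_cos_arg (x + y * Complex.I)
  · simpa [Complex.norm_add_mul_I] using Complex.norm_mul_sin_arg (x + y * Complex.I)

theorem Irrational.forall_mem_of_mem_of_mem {G : Type*} [Group G] [TopologicalSpace G]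
    {H : Subgroup G} (hH : IsClosed (H : Set G)) {f : ℝ → G} (hf : Continuous f)
    (hadd : ∀ s t, f (s + t) = f s * f t) {a b : ℝ} (hab : Irrational (a / b))
    (ha : f a ∈ H) (hb : f b ∈ H) (t : ℝ) : f t ∈ H := by
  let φ : ℝ →+ Additive G := AddMonoidHom.mk' (fun t ↦ Additive.ofMul (f t)) hadd
  let T := (Subgroup.toAddSubgroup H).comap φ
  have hT : IsClosed (T : Set ℝ) := hH.preimage hf
  have hdense : Dense (T : Set ℝ) :=
    (dense_addSubgroupClosure_pair_iff.2 hab).mono <|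
      (AddSubgroup.closure_le T).2 (Set.pair_subset ha hb)
  exact hT.closure_subset (hdense t)

theorem Subgroup.topologicalClosure_eq_top_iff_dense {G : Type*} [Group G] [TopologicalSpace G]
    [IsTopologicalGroup G] {S : Subgroup G} : S.topologicalClosure = ⊤ ↔ Dense (S : Set G) := by
  rw [← SetLike.coe_set_eq, Subgroup.topologicalClosure_coe, Subgroup.coe_top,
    dense_iff_closure_eq]

section TopologicalGeneration

variable {G : Type*} [Group G] [TopologicalSpace G]

theorem topGen_iff_dense {X : Finset G} :
    TopGen G X ↔ Dense (Subgroup.closure (X : Set G) : Set G) :=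
  dense_iff_closure_eq.symm

theorem TopGen.mono {X Y : Finset G} (hX : TopGen G X) (hXY : X ⊆ Y) : TopGen G Y := by
  rw [topGen_iff_dense] at hX ⊢
  exact hX.mono (Subgroup.closure_mono (Finset.coe_subset.2 hXY))

theorem irredGen_of_forall_not_topGen_erase [DecidableEq G] {X : Finset G} (hX : TopGen G X)
    (h : ∀ x ∈ X, ¬ TopGen G (X.erase x)) : IrredGen G X := by
  refine ⟨hX, fun Y hYX hY ↦ ?_⟩
  obtain ⟨x, hxX, hxY⟩ := Finset.exists_of_ssubset hYX
  exact h x hxX <| hY.mono fun y hy ↦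
    Finset.mem_erase.2 ⟨by rintro rfl; exact hxY hy, hYX.subset hy⟩

theorem notMem_closure_of_dense_closure_insert {s : Set G} {a : G}
    (h : Dense (Subgroup.closure (insert a s) : Set G))
    (hs : ¬ Dense (Subgroup.closure s : Set G)) : a ∉ Subgroup.closure s := fun ha ↦ hs <| by
  rwa [le_antisymm ((Subgroup.closure_le _).2 (Set.insert_subset ha Subgroup.subset_closure))
    (Subgroup.closure_mono (Set.subset_insert a s))] at h

theorem notMem_closure_pair_of_dense_closure_triple {a b c : G}
    (habc : Dense (Subgroup.closure {a, b, c} : Set G))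
    (hab : ¬ Dense (Subgroup.closure {a, b} : Set G))
    (hac : ¬ Dense (Subgroup.closure {a, c} : Set G))
    (hbc : ¬ Dense (Subgroup.closure {b, c} : Set G)) :
    a ∉ Subgroup.closure {b, c} ∧ b ∉ Subgroup.closure {a, c} ∧ c ∉ Subgroup.closure {a, b} :=
  ⟨notMem_closure_of_dense_closure_insert habc hbc,
    notMem_closure_of_dense_closure_insert (by rwa [Set.insert_comm]) hac,
    notMem_closure_of_dense_closure_insert (by rwa [Set.insert_comm, Set.pair_comm]) hab⟩

theorem three_le_mRank {a b c : G} (habc : Dense (Subgroup.closure {a, b, c} : Set G))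
    (hab : ¬ Dense (Subgroup.closure {a, b} : Set G))
    (hac : ¬ Dense (Subgroup.closure {a, c} : Set G))
    (hbc : ¬ Dense (Subgroup.closure {b, c} : Set G)) : 3 ≤ mRank G := by
  classical
  obtain ⟨ha, hb, -⟩ := notMem_closure_pair_of_dense_closure_triple habc hab hac hbc
  have hab' : a ≠ b := fun h ↦ ha (h ▸ Subgroup.subset_closure (by simp))
  have hac' : a ≠ c := fun h ↦ ha (h ▸ Subgroup.subset_closure (by simp))
  have hbc' : b ≠ c := fun h ↦ hb (h ▸ Subgroup.subset_closure (by simp))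
  refine le_sSup ⟨{a, b, c}, irredGen_of_forall_not_topGen_erase ?_ ?_, ?_⟩
  · rwa [topGen_iff_dense, Finset.coe_insert, Finset.coe_pair]
  · have hea : ({a, b, c} : Finset G).erase a = {b, c} :=
      Finset.erase_insert (by simp [hab', hac'])
    have heb : ({a, b, c} : Finset G).erase b = {a, c} := by
      rw [Finset.erase_insert_of_ne hab', Finset.erase_insert (by simpa using hbc')]
    have hec : ({a, b, c} : Finset G).erase c = {a, b} := by
      rw [Finset.erase_insert_of_ne hac', Finset.erase_insert_of_ne hbc', Finset.erase_singleton,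
        insert_empty_eq]
    simp only [Finset.forall_mem_insert, Finset.mem_singleton, forall_eq, hea, heb, hec,
      topGen_iff_dense, Finset.coe_pair]
    exact ⟨hbc, hac, hab⟩
  · rw [Finset.card_eq_three.2 ⟨a, b, c, hab', hac', hbc', rfl⟩]
    rfl

end TopologicalGeneration

namespace Matrix

variable {n : Type*} [DecidableEq n]

def halfTurn (u : n → ℝ) : Matrix n n ℝ := (2 : ℝ) • vecMulVec u u - 1

theorem transpose_halfTurn (u : n → ℝ) : (halfTurn u)ᵀ = halfTurn u := by
  simp [halfTurn]

theorem halfTurn_mulVec_of_dotProduct_eq_zero [Fintype n] {u v : n → ℝ} (h : u ⬝ᵥ v = 0) :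
    halfTurn u *ᵥ v = -v := by
  simp [halfTurn, sub_mulVec, smul_mulVec, vecMulVec_mulVec, h]

theorem halfTurn_mul_self [Fintype n] {u : n → ℝ} (hu : u ⬝ᵥ u = 1) :
    halfTurn u * halfTurn u = 1 := by
  simp only [halfTurn, sub_mul, mul_sub, smul_mul_smul_comm, vecMulVec_mul_vecMulVec, hu,
    one_smul, mul_one, one_mul]
  module

theorem halfTurn_mem_orthogonalGroup [Fintype n] {u : n → ℝ} (hu : u ⬝ᵥ u = 1) :
    halfTurn u ∈ orthogonalGroup n ℝ := by
  rw [mem_orthogonalGroup_iff, transpose_halfTurn, halfTurn_mul_self hu]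

theorem det_halfTurn [Fintype n] (hn : Odd (Fintype.card n)) {u : n → ℝ} (hu : u ⬝ᵥ u = 1) :
    (halfTurn u).det = 1 := by
  have : halfTurn u = -(1 + replicateCol Unit ((-2 : ℝ) • u) * replicateRow Unit u) := by
    rw [← vecMulVec_eq, halfTurn, neg_smul, neg_vecMulVec, smul_vecMulVec]
    abel
  rw [this, det_neg, det_one_add_replicateCol_mul_replicateRow, hn.neg_one_pow]
  rw [dotProduct_smul, dotProduct_comm, hu]
  norm_num

theorem exists_ne_zero_dotProduct_eq_zero {R : Type*} [CommRing R] [IsDomain R]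
    (u w : Fin 3 → R) : ∃ v ≠ 0, u ⬝ᵥ v = 0 ∧ w ⬝ᵥ v = 0 := by
  obtain ⟨v, hv, huwv⟩ := exists_mulVec_eq_zero_iff.2 <|
    det_eq_zero_of_row_eq_zero (A := of ![u, w, 0]) 2 fun _ ↦ rfl
  exact ⟨v, hv, congrFun huwv 0, congrFun huwv 1⟩

end Matrix

section LineStabilizer

variable {G n R : Type*} [Group G] [Fintype n] [DecidableEq n] [Ring R]

def lineStabilizer (ρ : G →* Matrix n n R) (v : n → R) : Subgroup G where
  carrier := {g | ρ g *ᵥ v = v ∨ ρ g *ᵥ v = -v}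
  one_mem' := by simp
  mul_mem' := by
    rintro g h (hg | hg) (hh | hh) <;> simp [← mulVec_mulVec, hg, hh, mulVec_neg]
  inv_mem' := by
    intro g hg
    have key : ρ g⁻¹ *ᵥ (ρ g *ᵥ v) = v := by
      rw [mulVec_mulVec, ← map_mul, inv_mul_cancel, map_one, one_mulVec]
    rcases hg with hg | hg <;> rw [hg] at key
    · exact Or.inl key
    · exact Or.inr <| neg_eq_iff_eq_neg.1 <| by rwa [mulVec_neg] at key

theorem mem_lineStabilizer {ρ : G →* Matrix n n R} {v : n → R} {g : G} :
    g ∈ lineStabilizer ρ v ↔ ρ g *ᵥ v = v ∨ ρ g *ᵥ v = -v :=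
  Iff.rfl

theorem isClosed_lineStabilizer [TopologicalSpace G] [TopologicalSpace R] [IsTopologicalRing R]
    [T2Space R] {ρ : G →* Matrix n n R} (hρ : Continuous ρ) (v : n → R) :
    IsClosed (lineStabilizer ρ v : Set G) :=
  have hρv : Continuous fun g ↦ ρ g *ᵥ v := hρ.matrix_mulVec continuous_const
  (isClosed_eq hρv continuous_const).union (isClosed_eq hρv continuous_const)

end LineStabilizer

namespace SO3

def toMatrix : SO3 →* Matrix (Fin 3) (Fin 3) ℝ :=
  (orthogonalGroup (Fin 3) ℝ).subtype.comp (Subgroup.subtype SO3)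

theorem isEmbedding_toMatrix : Topology.IsEmbedding toMatrix :=
  Topology.IsEmbedding.subtypeVal.comp Topology.IsEmbedding.subtypeVal

theorem continuous_toMatrix : Continuous toMatrix := isEmbedding_toMatrix.continuous

@[ext]
theorem ext {g h : SO3} (hgh : toMatrix g = toMatrix h) : g = h :=
  isEmbedding_toMatrix.injective hgh

theorem transpose_mul_self (g : SO3) : (toMatrix g)ᵀ * toMatrix g = 1 :=
  (mem_orthogonalGroup_iff' (Fin 3) ℝ).1 g.1.2

theorem mul_transpose_self (g : SO3) : toMatrix g * (toMatrix g)ᵀ = 1 :=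
  (mem_orthogonalGroup_iff (Fin 3) ℝ).1 g.1.2

theorem det_toMatrix (g : SO3) : (toMatrix g).det = 1 := g.2

def mk (M : Matrix (Fin 3) (Fin 3) ℝ) (hM : M ∈ orthogonalGroup (Fin 3) ℝ) (hdet : M.det = 1) :
    SO3 :=
  ⟨⟨M, hM⟩, hdet⟩

def halfTurn (u : Fin 3 → ℝ) (hu : u ⬝ᵥ u = 1) : SO3 :=
  mk (Matrix.halfTurn u) (halfTurn_mem_orthogonalGroup hu) (det_halfTurn (by decide) hu)

theorem toMatrix_halfTurn {u : Fin 3 → ℝ} (hu : u ⬝ᵥ u = 1) :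
    toMatrix (halfTurn u hu) = Matrix.halfTurn u :=
  rfl

theorem halfTurn_sq {u : Fin 3 → ℝ} (hu : u ⬝ᵥ u = 1) : halfTurn u hu ^ 2 = 1 :=
  ext <| by rw [map_pow, sq, toMatrix_halfTurn, halfTurn_mul_self hu, map_one]

theorem dotProduct_self_cos_sin_zero (t : ℝ) :
    ![cos t, sin t, 0] ⬝ᵥ ![cos t, sin t, 0] = 1 := by
  simp [← sq]

theorem dotProduct_self_cos_zero_neg_sin (t : ℝ) :
    ![cos t, 0, -sin t] ⬝ᵥ ![cos t, 0, -sin t] = 1 := by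
  simp [← sq]

theorem dotProduct_self_one_zero_zero : (![1, 0, 0] : Fin 3 → ℝ) ⬝ᵥ ![1, 0, 0] = 1 := by
  simp

def halfTurnX : SO3 := halfTurn _ dotProduct_self_one_zero_zero

noncomputable def halfTurnXY (t : ℝ) : SO3 := halfTurn _ (dotProduct_self_cos_sin_zero t)

noncomputable def halfTurnXZ (t : ℝ) : SO3 := halfTurn _ (dotProduct_self_cos_zero_neg_sin t)

/-- Defined as a product of two half-turns so that it lies in `SO3` by construction;
`toMatrix_rotZ` gives the usual rotation matrix. -/
noncomputable def rotZ (θ : ℝ) : SO3 := halfTurnXY (θ / 2) * halfTurnX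

noncomputable def rotY (θ : ℝ) : SO3 := halfTurnXZ (θ / 2) * halfTurnX

theorem toMatrix_rotZ (θ : ℝ) :
    toMatrix (rotZ θ) = !![cos θ, -sin θ, 0; sin θ, cos θ, 0; 0, 0, 1] := by
  obtain ⟨t, rfl⟩ : ∃ t, θ = 2 * t := ⟨θ / 2, by ring⟩
  rw [rotZ, halfTurnXY, halfTurnX, map_mul, toMatrix_halfTurn, toMatrix_halfTurn,
    mul_div_cancel_left₀ t two_ne_zero, cos_two_mul, sin_two_mul]
  ext i j
  fin_cases i <;> fin_cases j <;>
    simp [Matrix.halfTurn, vecMulVec, mul_apply, Fin.sum_univ_three] <;>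
    nlinarith [sin_sq_add_cos_sq t]

theorem toMatrix_rotY (θ : ℝ) :
    toMatrix (rotY θ) = !![cos θ, 0, sin θ; 0, 1, 0; -sin θ, 0, cos θ] := by
  obtain ⟨t, rfl⟩ : ∃ t, θ = 2 * t := ⟨θ / 2, by ring⟩
  rw [rotY, halfTurnXZ, halfTurnX, map_mul, toMatrix_halfTurn, toMatrix_halfTurn,
    mul_div_cancel_left₀ t two_ne_zero, cos_two_mul, sin_two_mul]
  ext i j
  fin_cases i <;> fin_cases j <;>
    simp [Matrix.halfTurn, vecMulVec, mul_apply, Fin.sum_univ_three] <;>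
    nlinarith [sin_sq_add_cos_sq t]

theorem rotZ_add (s t : ℝ) : rotZ (s + t) = rotZ s * rotZ t := by
  ext i j
  rw [map_mul, toMatrix_rotZ, toMatrix_rotZ, toMatrix_rotZ]
  fin_cases i <;> fin_cases j <;> simp [mul_apply, Fin.sum_univ_three, cos_add, sin_add] <;> ring

theorem rotY_add (s t : ℝ) : rotY (s + t) = rotY s * rotY t := by
  ext i j
  rw [map_mul, toMatrix_rotY, toMatrix_rotY, toMatrix_rotY]
  fin_cases i <;> fin_cases j <;> simp [mul_apply, Fin.sum_univ_three, cos_add, sin_add] <;> ring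

theorem rotZ_two_pi : rotZ (2 * π) = 1 := by
  ext i j
  rw [toMatrix_rotZ, map_one]
  fin_cases i <;> fin_cases j <;> simp

theorem rotY_two_pi : rotY (2 * π) = 1 := by
  ext i j
  rw [toMatrix_rotY, map_one]
  fin_cases i <;> fin_cases j <;> simp

theorem continuous_rotZ : Continuous rotZ := by
  rw [isEmbedding_toMatrix.continuous_iff, Function.comp_def]
  simp only [toMatrix_rotZ]
  fun_prop

theorem continuous_rotY : Continuous rotY := by
  rw [isEmbedding_toMatrix.continuous_iff, Function.comp_def]
  simp only [toMatrix_rotY]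
  fun_prop

theorem exists_eq_rotZ_of_mulVec_e3 {g : SO3} (hg : toMatrix g *ᵥ ![0, 0, 1] = ![0, 0, 1]) :
    ∃ γ, g = rotZ γ := by
  obtain ⟨h02, h12, h22⟩ : toMatrix g 0 2 = 0 ∧ toMatrix g 1 2 = 0 ∧ toMatrix g 2 2 = 1 := by
    simpa [funext_iff, Fin.forall_fin_succ, mulVec, dotProduct, Fin.sum_univ_three] using hg
  have entry (A : Matrix (Fin 3) (Fin 3) ℝ) (hA : A = 1) (i j : Fin 3) :=
    congrFun (congrFun hA i) j
  have hrow := entry _ (mul_transpose_self g) 2 2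
  have hcol₀ := entry _ (transpose_mul_self g) 0 0
  have hcol₁ := entry _ (transpose_mul_self g) 1 1
  have hdet := det_toMatrix g
  simp only [mul_apply, Fin.sum_univ_three, transpose_apply, one_apply_eq] at hrow hcol₀ hcol₁
  rw [det_fin_three] at hdet
  have h20 : toMatrix g 2 0 = 0 := by nlinarith
  have h21 : toMatrix g 2 1 = 0 := by nlinarith
  simp only [h02, h12, h22, h20, h21, mul_zero, zero_mul, mul_one, sub_zero, add_zero]
    at hdet hcol₀ hcol₁
  have hsq : (toMatrix g 1 1 - toMatrix g 0 0) ^ 2 + (toMatrix g 0 1 + toMatrix g 1 0) ^ 2 = 0 := by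
    linear_combination hcol₀ + hcol₁ - 2 * hdet
  obtain ⟨h11, h01⟩ := (add_eq_zero_iff_of_nonneg (sq_nonneg _) (sq_nonneg _)).1 hsq
  rw [sq_eq_zero_iff, sub_eq_zero] at h11
  rw [sq_eq_zero_iff, add_eq_zero_iff_eq_neg] at h01
  obtain ⟨γ, hcos, hsin⟩ := exists_polar (toMatrix g 0 0) (toMatrix g 1 0)
  rw [← sq, ← sq] at hcol₀
  rw [hcol₀, sqrt_one, one_mul] at hcos hsin
  refine ⟨γ, ext ?_⟩
  rw [toMatrix_rotZ]
  ext i j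
  fin_cases i <;> fin_cases j <;> simp [hcos, hsin, h02, h12, h22, h20, h21, h11, h01]

theorem exists_toMatrix_rotZ_mul_rotY_mulVec_e3 {v : Fin 3 → ℝ} (hv : v ⬝ᵥ v = 1) :
    ∃ α β, toMatrix (rotZ α * rotY β) *ᵥ ![0, 0, 1] = v := by
  obtain ⟨α, hα₀, hα₁⟩ := exists_polar (v 0) (v 1)
  set r := √(v 0 ^ 2 + v 1 ^ 2)
  obtain ⟨β, hβ₂, hβ₀⟩ := exists_polar (v 2) r
  have hr : √(v 2 ^ 2 + r ^ 2) = 1 := by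
    rw [sq_sqrt (by positivity), ← sqrt_one]
    congr 1
    simp only [vec3_dotProduct] at hv
    linear_combination hv
  rw [hr, one_mul] at hβ₂ hβ₀
  refine ⟨α, β, ?_⟩
  rw [map_mul, ← mulVec_mulVec, toMatrix_rotZ, toMatrix_rotY]
  ext i
  fin_cases i <;> simp [mulVec, dotProduct, Fin.sum_univ_three, hβ₀, hβ₂, mul_comm _ r, hα₀, hα₁]

theorem exists_eq_rotZ_mul_rotY_mul_rotZ (g : SO3) : ∃ α β γ, g = rotZ α * rotY β * rotZ γ := by
  have hv : (toMatrix g *ᵥ ![0, 0, 1]) ⬝ᵥ (toMatrix g *ᵥ ![0, 0, 1]) = 1 := by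
    rw [dotProduct_mulVec, ← mulVec_transpose, mulVec_mulVec, transpose_mul_self, one_mulVec]
    simp
  obtain ⟨α, β, hαβ⟩ := exists_toMatrix_rotZ_mul_rotY_mulVec_e3 hv
  obtain ⟨γ, hγ⟩ := exists_eq_rotZ_of_mulVec_e3 (g := (rotZ α * rotY β)⁻¹ * g) <| by
    rw [map_mul, ← mulVec_mulVec, ← hαβ, mulVec_mulVec, ← map_mul, inv_mul_cancel, map_one,
      one_mulVec]
  exact ⟨α, β, γ, by rw [← hγ, mul_inv_cancel_left]⟩

theorem eq_top_of_forall_rotZ_mem_of_forall_rotY_mem {H : Subgroup SO3}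
    (hZ : ∀ θ, rotZ θ ∈ H) (hY : ∀ θ, rotY θ ∈ H) : H = ⊤ :=
  eq_top_iff.2 fun g _ ↦ by
    obtain ⟨α, β, γ, rfl⟩ := exists_eq_rotZ_mul_rotY_mul_rotZ g
    exact mul_mem (mul_mem (hZ α) (hY β)) (hZ γ)

theorem lineStabilizer_ne_top {v : Fin 3 → ℝ} (hv : v ≠ 0) : lineStabilizer toMatrix v ≠ ⊤ := by
  intro htop
  have hZ : rotZ (π / 2) ∈ lineStabilizer toMatrix v := htop ▸ Subgroup.mem_top _
  have hY : rotY (π / 2) ∈ lineStabilizer toMatrix v := htop ▸ Subgroup.mem_top _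
  rw [mem_lineStabilizer, toMatrix_rotZ] at hZ
  rw [mem_lineStabilizer, toMatrix_rotY] at hY
  simp [funext_iff, Fin.forall_fin_succ, dotProduct, Fin.sum_univ_three] at hZ hY
  apply hv
  ext i
  fin_cases i <;> simp <;> rcases hZ with hZ | hZ <;> rcases hY with hY | hY <;> linarith

theorem not_dense_closure_pair_halfTurn {u w : Fin 3 → ℝ} (hu : u ⬝ᵥ u = 1) (hw : w ⬝ᵥ w = 1) :
    ¬ Dense (Subgroup.closure {halfTurn u hu, halfTurn w hw} : Set SO3) := by
  obtain ⟨v, hv, huv, hwv⟩ := exists_ne_zero_dotProduct_eq_zero u w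
  have hle : Subgroup.closure {halfTurn u hu, halfTurn w hw} ≤ lineStabilizer toMatrix v :=
    (Subgroup.closure_le _).2 <| Set.pair_subset
      (Or.inr (halfTurn_mulVec_of_dotProduct_eq_zero huv))
      (Or.inr (halfTurn_mulVec_of_dotProduct_eq_zero hwv))
  rw [← Subgroup.topologicalClosure_eq_top_iff_dense, eq_top_iff]
  exact fun h ↦ lineStabilizer_ne_top hv <| top_le_iff.1 <| h.trans <|
    Subgroup.topologicalClosure_minimal _ hle (isClosed_lineStabilizer continuous_toMatrix v)

theorem dense_closure_halfTurnX_halfTurnXY_halfTurnXZ {t : ℝ} (ht : Irrational (t / π)) :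
    Dense (Subgroup.closure {halfTurnX, halfTurnXY t, halfTurnXZ t} : Set SO3) := by
  set S := Subgroup.closure {halfTurnX, halfTurnXY t, halfTurnXZ t}
  have hH := S.isClosed_topologicalClosure
  have hmem {x} (hx : x ∈ ({halfTurnX, halfTurnXY t, halfTurnXZ t} : Set SO3)) :
      x ∈ S.topologicalClosure :=
    S.le_topologicalClosure (Subgroup.subset_closure hx)
  have hirr : Irrational (2 * t / (2 * π)) := by rwa [mul_div_mul_left _ _ two_ne_zero]
  have hZ : rotZ (2 * t) ∈ S.topologicalClosure := by
    rw [rotZ, mul_div_cancel_left₀ t two_ne_zero]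
    exact mul_mem (hmem (by simp)) (hmem (by simp))
  have hY : rotY (2 * t) ∈ S.topologicalClosure := by
    rw [rotY, mul_div_cancel_left₀ t two_ne_zero]
    exact mul_mem (hmem (by simp)) (hmem (by simp))
  rw [← Subgroup.topologicalClosure_eq_top_iff_dense]
  exact eq_top_of_forall_rotZ_mem_of_forall_rotY_mem
    (hirr.forall_mem_of_mem_of_mem hH continuous_rotZ rotZ_add hZ (rotZ_two_pi ▸ one_mem _))
    (hirr.forall_mem_of_mem_of_mem hH continuous_rotY rotY_add hY (rotY_two_pi ▸ one_mem _))

end SO3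

/-- There are three involutions topologically generating `SO(3)` irredundantly:
no two of them topologically generate. Hence `m(SO(3)) ≥ 3`. -/
theorem stmt8 :
    (∃ a b c : SO3, a ^ 2 = 1 ∧ a ≠ 1 ∧ b ^ 2 = 1 ∧ b ≠ 1 ∧ c ^ 2 = 1 ∧ c ≠ 1 ∧
      closure ((Subgroup.closure ({a, b, c} : Set SO3) : Subgroup SO3) : Set SO3) =
        Set.univ ∧
      closure ((Subgroup.closure ({a, b} : Set SO3) : Subgroup SO3) : Set SO3) ≠
        Set.univ ∧
      closure ((Subgroup.closure ({a, c} : Set SO3) : Subgroup SO3) : Set SO3) ≠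
        Set.univ ∧
      closure ((Subgroup.closure ({b, c} : Set SO3) : Subgroup SO3) : Set SO3) ≠
        Set.univ) ∧
    3 ≤ mRank SO3 := by
  have habc := SO3.dense_closure_halfTurnX_halfTurnXY_halfTurnXZ (t := 1) <| by
    rw [one_div, irrational_inv_iff]
    exact irrational_pi
  have hab : ¬ Dense (Subgroup.closure {SO3.halfTurnX, SO3.halfTurnXY 1} : Set SO3) :=
    SO3.not_dense_closure_pair_halfTurn _ _
  have hac : ¬ Dense (Subgroup.closure {SO3.halfTurnX, SO3.halfTurnXZ 1} : Set SO3) :=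
    SO3.not_dense_closure_pair_halfTurn _ _
  have hbc : ¬ Dense (Subgroup.closure {SO3.halfTurnXY 1, SO3.halfTurnXZ 1} : Set SO3) :=
    SO3.not_dense_closure_pair_halfTurn _ _
  obtain ⟨ha, hb, hc⟩ := notMem_closure_pair_of_dense_closure_triple habc hab hac hbc
  simp only [ne_eq, ← dense_iff_closure_eq]
  exact ⟨⟨SO3.halfTurnX, SO3.halfTurnXY 1, SO3.halfTurnXZ 1,
    SO3.halfTurn_sq _, fun h ↦ ha (h ▸ one_mem _), SO3.halfTurn_sq _, fun h ↦ hb (h ▸ one_mem _),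
    SO3.halfTurn_sq _, fun h ↦ hc (h ▸ one_mem _), habc, hab, hac, hbc⟩,
    three_le_mRank habc hab hac hbc⟩
end

section
/- Let f : G → H be a surjective homomorphism of topological groups with the 'absolutely Gaschütz' property: whenever f(g_1),…,f(g_n) topologically generate H, the elements g_1,…,g_n topologically generate G. Then m(G) = m(H), where m denotes the supremum of sizes of finite irredundant topologically generating sets. -/
/-- If `f : G → H` is a continuous surjective homomorphism which is absolutely Gaschütz
(tuples whose images topologically generate `H` topologically generate `G`), then
`m(G) = m(H)`. -/
theorem stmt10 {G H : Type*} [Group G] [TopologicalSpace G]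
    [Group H] [TopologicalSpace H]
    (f : G →* H) (hcont : Continuous f) (hsurj : Function.Surjective f)
    (hAG : ∀ (n : ℕ) (g : Fin n → G),
      closure ((Subgroup.closure (Set.range (fun i => f (g i))) : Subgroup H) : Set H)
        = Set.univ →
      closure ((Subgroup.closure (Set.range g) : Subgroup G) : Set G) = Set.univ) :
    mRank G = mRank H := by
  classical
  -- key1: if the image of X topologically generates H, then X topologically generates G
  have key1 : ∀ X : Finset G, TopGen H (X.image f) → TopGen G X := by
    intro X hX
    set g : Fin X.card → G := fun i => (X.equivFin.symm i : G) with hg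
    have hrg : Set.range g = (X : Set G) := by
      have : Set.range g = Set.range (Subtype.val : X → G) :=
        X.equivFin.symm.surjective.range_comp _
      rw [this]; ext x; simp
    have hrfg : Set.range (fun i => f (g i)) = ((X.image f : Finset H) : Set H) := by
      have : Set.range (fun i => f (g i)) = f '' Set.range g := Set.range_comp f g
      rw [this, hrg, Finset.coe_image]
    have := hAG X.card g (by rw [hrfg]; exact hX)
    rwa [hrg] at this
  -- key2: topological generation is pushed forward by f
  have key2 : ∀ X : Finset G, TopGen G X → TopGen H (X.image f) := by
    intro X hX
    apply Set.eq_univ_of_univ_subset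
    have h1 : (Set.univ : Set H) = f '' Set.univ := by
      rw [Set.image_univ, Set.range_eq_univ.mpr hsurj]
    rw [h1, ← hX]
    calc f '' closure ((Subgroup.closure (X : Set G) : Subgroup G) : Set G)
        ⊆ closure (f '' ((Subgroup.closure (X : Set G) : Subgroup G) : Set G)) :=
          image_closure_subset_closure_image hcont
      _ = closure (((Subgroup.closure (X : Set G)).map f : Subgroup H) : Set H) := by
          rw [Subgroup.coe_map]
      _ = closure ((Subgroup.closure ((X.image f : Finset H) : Set H) : Subgroup H) : Set H) := by
          rw [MonoidHom.map_closure, Finset.coe_image]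
  -- Lemma A: push an irredundant generating set forward
  have lemA : ∀ X : Finset G, IrredGen G X →
      IrredGen H (X.image f) ∧ (X.image f).card = X.card := by
    intro X hX
    have hinj : Set.InjOn f (X : Set G) := by
      intro a ha b hb hab
      by_contra hne
      have hbX : b ∈ X := hb
      have himg : (X.erase b).image f = X.image f := by
        apply Finset.Subset.antisymm (Finset.image_subset_image (Finset.erase_subset _ _))
        intro z hz
        obtain ⟨x, hx, hxz⟩ := Finset.mem_image.mp hz
        by_cases hxb : x = b
        · exact Finset.mem_image.mpr ⟨a, Finset.mem_erase.mpr ⟨hne, ha⟩,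
            by rw [hab, ← hxb, hxz]⟩
        · exact Finset.mem_image.mpr ⟨x, Finset.mem_erase.mpr ⟨hxb, hx⟩, hxz⟩
      have : TopGen G (X.erase b) := key1 _ (by rw [himg]; exact key2 X hX.1)
      exact hX.2 _ (Finset.erase_ssubset hbX) this
    refine ⟨⟨key2 X hX.1, ?_⟩, Finset.card_image_of_injOn hinj⟩
    intro Z hZ hTZ
    set X' : Finset G := X.filter (fun x => f x ∈ Z) with hX'
    have hX'sub : X' ⊆ X := Finset.filter_subset _ _
    have himg : X'.image f = Z := by
      apply Finset.Subset.antisymm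
      · intro z hz
        obtain ⟨x, hx, hxz⟩ := Finset.mem_image.mp hz
        exact hxz ▸ (Finset.mem_filter.mp hx).2
      · intro z hz
        obtain ⟨x, hx, hxz⟩ := Finset.mem_image.mp (hZ.subset hz)
        exact Finset.mem_image.mpr ⟨x, Finset.mem_filter.mpr ⟨hx, hxz ▸ hz⟩, hxz⟩
    have hss : X' ⊂ X := by
      obtain ⟨z, hzX, hzZ⟩ := Finset.exists_of_ssubset hZ
      obtain ⟨x, hx, hxz⟩ := Finset.mem_image.mp hzX
      refine (Finset.ssubset_iff_of_subset hX'sub).mpr ⟨x, hx, ?_⟩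
      intro hmem
      exact hzZ (hxz ▸ (Finset.mem_filter.mp hmem).2)
    exact hX.2 X' hss (key1 X' (by rw [himg]; exact hTZ))
  -- Lemma B: lift an irredundant generating set
  have lemB : ∀ Y : Finset H, IrredGen H Y →
      ∃ X : Finset G, IrredGen G X ∧ X.card = Y.card := by
    intro Y hY
    set s : H → G := Function.surjInv hsurj with hs
    have hfs : ∀ y, f (s y) = y := Function.surjInv_eq hsurj
    have hsinj : Function.Injective s := fun a b h => by
      rw [← hfs a, ← hfs b, h]
    set X : Finset G := Y.image s with hXdef
    have himg : X.image f = Y := by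
      rw [hXdef, Finset.image_image]
      have : (f ∘ s) = id := funext hfs
      rw [this, Finset.image_id]
    have hcard : X.card = Y.card := Finset.card_image_of_injective _ hsinj
    refine ⟨X, ⟨key1 X (by rw [himg]; exact hY.1), ?_⟩, hcard⟩
    intro X' hX' hT
    have hsub : X'.image f ⊆ Y := himg ▸ Finset.image_subset_image hX'.subset
    have hlt : (X'.image f).card < Y.card := by
      calc (X'.image f).card ≤ X'.card := Finset.card_image_le
        _ < X.card := Finset.card_lt_card hX'
        _ = Y.card := hcard
    have hss : X'.image f ⊂ Y := by
      refine Finset.ssubset_iff_subset_ne.mpr ⟨hsub, ?_⟩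
      intro heq
      rw [heq] at hlt
      exact lt_irrefl _ hlt
    exact hY.2 _ hss (key2 X' hT)
  -- conclude
  unfold mRank
  congr 1
  ext n
  simp only [Set.mem_setOf_eq]
  constructor
  · rintro ⟨X, hX, hc⟩
    exact ⟨X.image f, (lemA X hX).1, by rw [(lemA X hX).2]; exact hc⟩
  · rintro ⟨Y, hY, hc⟩
    obtain ⟨X, hX, hcard⟩ := lemB Y hY
    exact ⟨X, hX, by rw [hcard]; exact hc⟩
end

section
/- Let G be a topological group and H a quotient of G by a closed normal subgroup N, with quotient map q. Suppose n > m(G) and g_1,…,g_n ∈ H topologically generate H, and suppose lifts ĝ_1,…,ĝ_n ∈ G exist that topologically generate G (Gaschütz lifting). Then some proper subtuple of (g_1,…,g_n) topologically generates H; i.e., m(H) ≤ m(G) whenever such liftings always exist. -/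
lemma topgen_mono {G : Type*} [Group G] [TopologicalSpace G] {A B : Set G}
    (hAB : A ⊆ B)
    (h : closure ((Subgroup.closure A : Subgroup G) : Set G) = Set.univ) :
    closure ((Subgroup.closure B : Subgroup G) : Set G) = Set.univ := by
  apply Set.eq_univ_of_univ_subset
  rw [← h]
  exact closure_mono (Subgroup.closure_mono hAB)

lemma topgen_push {G H : Type*} [Group G] [TopologicalSpace G]
    [Group H] [TopologicalSpace H]
    (q : G →* H) (hcont : Continuous q) (hsurj : Function.Surjective q) (A : Set G)
    (h : closure ((Subgroup.closure A : Subgroup G) : Set G) = Set.univ) :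
    closure ((Subgroup.closure (q '' A) : Subgroup H) : Set H) = Set.univ := by
  have hmap : (Subgroup.closure (q '' A) : Set H)
      = q '' ((Subgroup.closure A : Subgroup G) : Set G) := by
    rw [← MonoidHom.map_closure]
    rfl
  apply Set.eq_univ_of_univ_subset
  calc (Set.univ : Set H) = q '' (closure ((Subgroup.closure A : Subgroup G) : Set G)) := by
        rw [h, Set.image_univ, Set.range_eq_univ.2 hsurj]
    _ ⊆ closure (q '' ((Subgroup.closure A : Subgroup G) : Set G)) :=
        image_closure_subset_closure_image hcont
    _ = closure ((Subgroup.closure (q '' A) : Subgroup H) : Set H) := by rw [hmap]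

/-- Gaschütz lifting implies `m(H) ≤ m(G)`: if `n > m(G)`, a topologically generating
`n`-tuple of `H` admitting a topologically generating lift to `G` is redundant. -/
theorem stmt17 {G H : Type*} [Group G] [TopologicalSpace G]
    [Group H] [TopologicalSpace H]
    (q : G →* H) (hcont : Continuous q) (hsurj : Function.Surjective q)
    {n : ℕ} (hn : mRank G < (n : ℕ∞))
    (g : Fin n → H)
    (hgen : closure ((Subgroup.closure (Set.range g) : Subgroup H) : Set H) = Set.univ)
    (gLift : Fin n → G) (hlift : ∀ i, q (gLift i) = g i)
    (hliftgen : closure ((Subgroup.closure (Set.range gLift) : Subgroup G) : Set G) =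
      Set.univ) :
    ∃ i : Fin n, closure ((Subgroup.closure (g '' {j : Fin n | j ≠ i}) : Subgroup H) :
      Set H) = Set.univ := by
  by_cases hex : ∃ i : Fin n,
      closure ((Subgroup.closure (gLift '' {j : Fin n | j ≠ i}) : Subgroup G) : Set G)
        = Set.univ
  · obtain ⟨i, hi⟩ := hex
    refine ⟨i, ?_⟩
    have := topgen_push q hcont hsurj _ hi
    rwa [Set.image_image, show (fun j => q (gLift j)) = g from funext hlift] at this
  · push_neg at hex
    exfalso
    haveI := Classical.decEq G
    -- gLift is injective
    have hinj : Function.Injective gLift := by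
      intro i j hij
      by_contra hne
      apply hex i
      apply topgen_mono _ hliftgen
      rintro _ ⟨k, rfl⟩
      by_cases hk : k = i
      · exact ⟨j, fun h => hne (h ▸ rfl), by rw [hk, hij]⟩
      · exact ⟨k, hk, rfl⟩
    set X : Finset G := Finset.image gLift Finset.univ with hX
    have hXcoe : (X : Set G) = Set.range gLift := by
      simp [hX]
    have hXcard : X.card = n := by
      rw [hX, Finset.card_image_of_injective _ hinj, Finset.card_univ, Fintype.card_fin]
    have hirr : IrredGen G X := by
      constructor
      · unfold TopGen; rw [hXcoe]; exact hliftgen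
      · intro Y hY hYgen
        obtain ⟨x, hxX, hxY⟩ := Finset.exists_of_ssubset hY
        rw [hX, Finset.mem_image] at hxX
        obtain ⟨i, -, rfl⟩ := hxX
        apply hex i
        apply topgen_mono _ hYgen
        intro y hy
        have hyX : y ∈ X := hY.1 hy
        rw [hX, Finset.mem_image] at hyX
        obtain ⟨k, -, rfl⟩ := hyX
        refine ⟨k, ?_, rfl⟩
        intro hk
        exact hxY (hk ▸ hy)
    have hle : (n : ℕ∞) ≤ mRank G := le_sSup ⟨X, hirr, by rw [hXcard]⟩
    exact absurd hle (not_le.2 hn)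
end
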